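/- If a formula φ ∈ HML_srbb distinguishes a process p from a set of processes Q, then expr(φ) ∈ Win_a([p,Q]_a) in the weak spectroscopy energy game G△. -/

import Mathlib

/-!
A distinguishing formula is read as an attacker strategy: by mutual induction on formulas,
delayed formulas and conjuncts, each connective prescribes the game move that matches it
(delay and procrastination for `⟨ε⟩`, observation for `⟨a⟩`, the conjunction moves for `⋀`,
positive and negative conjunct moves for `⟨ε⟩χ` and `¬⟨ε⟩χ`), and the price of the connective
covers exactly the energy that move consumes. Winning budgets are upward closed, so against each
defender answer `q` it suffices that the supremum in the price dominates the price of one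
conjunct refuting `q`.
-/

open Classical

noncomputable section

namespace Spectroscopy

/-! ### Energies and declining energy games -/

/-- Energies: 8-dimensional vectors over `ℕ ∪ {∞}`, ordered componentwise. -/
abbrev Energy : Type := Fin 8 → ℕ∞

/-- The `i`-th unit vector. -/
def unitE (i : Fin 8) : Energy := fun k => if k = i then 1 else 0

/-- The vector with value `v` at position `i` and `0` elsewhere. -/
def onlyAt (i : Fin 8) (v : ℕ∞) : Energy := fun k => if k = i then v else 0

/-- Components of energy updates: `-1`, `0`, or minimum selection `min_D`.
For the component at position `k`, `minWith D` selects the minimum over the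
positions `{k} ∪ D`, so the requirement `k ∈ D` of the paper holds by
construction. -/
inductive UpdComp : Type
  | decr : UpdComp
  | zero : UpdComp
  | minWith (D : Finset (Fin 8)) : UpdComp
deriving DecidableEq

/-- Energy updates. -/
abbrev Update : Type := Fin 8 → UpdComp

/-- Partial application of an update to an energy (`none` when a component
would become negative). -/
def upd (e : Energy) (u : Update) : Option Energy :=
  if ∀ k, u k = UpdComp.decr → e k ≠ 0 then
    some (fun k =>
      match u k with
      | UpdComp.decr => e k - 1
      | UpdComp.zero => e k
      | UpdComp.minWith D => (insert k D).inf e)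
  else none

/-- A declining energy game: positions, a defender predicate (attacker
positions are the non-defender ones), and moves labeled with updates. -/
structure EGame (Pos : Type) where
  defender : Pos → Prop
  move : Pos → Update → Pos → Prop

/-- Attacker winning budgets `Win_a`: at an attacker position some move must
lead to an attacker-won position under the updated energy; at a defender
position every move must (be defined and) lead to an attacker-won position. -/
inductive EGame.Win {Pos : Type} (G : EGame Pos) : Pos → Energy → Prop
  | attack {g : Pos} {u : Update} {g' : Pos} {e e' : Energy} :
      ¬ G.defender g → G.move g u g' → upd e u = some e' → G.Win g' e' →
      G.Win g e
  | defend {g : Pos} {e : Energy} :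
      G.defender g →
      (∀ u g', G.move g u g' → upd e u ≠ none) →
      (∀ u g' e', G.move g u g' → upd e u = some e' → G.Win g' e') →
      G.Win g e

/-! ### Labeled transition systems with silent steps -/

section LTS

variable {Proc Act : Type}

/-- Weak internal steps `↠`: reflexive-transitive closure of `τ`-steps. -/
def Star (Tr : Proc → Act → Proc → Prop) (τ : Act) : Proc → Proc → Prop :=
  Relation.ReflTransGen fun p p' => Tr p τ p'

/-- A process is stable if it has no `τ`-step. -/
def Stable (Tr : Proc → Act → Proc → Prop) (τ : Act) (p : Proc) : Prop :=
  ∀ p', ¬ Tr p τ p'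

/-- Optional step `p →(α) p'`: a real `α`-step, or `α = τ` and `p = p'`. -/
def OptStep (Tr : Proc → Act → Proc → Prop) (τ : Act) (p : Proc) (α : Act) (p' : Proc) : Prop :=
  Tr p α p' ∨ (α = τ ∧ p = p')

/-- Lift of `→a` to sets. -/
def SetStep (Tr : Proc → Act → Proc → Prop) (Q : Set Proc) (a : Act) (Q' : Set Proc) : Prop :=
  Q' = {q' | ∃ q ∈ Q, Tr q a q'}

/-- Lift of `↠` to sets. -/
def SetStar (Tr : Proc → Act → Proc → Prop) (τ : Act) (Q Q' : Set Proc) : Prop :=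
  Q' = {q' | ∃ q ∈ Q, Star Tr τ q q'}

/-- Lift of `→(α)` to sets. -/
def SetOpt (Tr : Proc → Act → Proc → Prop) (τ : Act) (Q : Set Proc) (α : Act)
    (Q' : Set Proc) : Prop :=
  Q' = {q' | ∃ q ∈ Q, OptStep Tr τ q α q'}

end LTS

/-! ### The logic HML_srbb -/

mutual
/-- Formulas `φ` of HML_srbb: `⟨ε⟩χ` or immediate conjunctions `⋀Ψ`
(conjunctions are indexed by an arbitrary type). `⊤` is the empty conjunction. -/
inductive Formula (Act : Type) (τ : Act) : Type 1
  | delayed : DFormula Act τ → Formula Act τ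
  | conj : (I : Type) → (I → Conjunct Act τ) → Formula Act τ

/-- Delayed formulas `χ`: observations `⟨a⟩φ` (with `a ≠ τ`), standard
conjunctions `⋀Ψ`, stable conjunctions `⋀({¬⟨τ⟩⊤} ∪ Ψ)`, and branching
conjunctions `⋀({(α)φ} ∪ Ψ)`. -/
inductive DFormula (Act : Type) (τ : Act) : Type 1
  | obs : (a : Act) → a ≠ τ → Formula Act τ → DFormula Act τ
  | conj : (I : Type) → (I → Conjunct Act τ) → DFormula Act τ
  | stableConj : (I : Type) → (I → Conjunct Act τ) → DFormula Act τ
  | branchConj : (α : Act) → Formula Act τ → (I : Type) → (I → Conjunct Act τ) → DFormula Act τ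

/-- Conjuncts `ψ`: positive `⟨ε⟩χ` or negative `¬⟨ε⟩χ`. -/
inductive Conjunct (Act : Type) (τ : Act) : Type 1
  | pos : DFormula Act τ → Conjunct Act τ
  | neg : DFormula Act τ → Conjunct Act τ
end

section Semantics

variable {Proc Act : Type}

mutual
/-- Semantics `⟦φ⟧`. -/
def Sat (Tr : Proc → Act → Proc → Prop) (τ : Act) (p : Proc) : Formula Act τ → Prop
  | .delayed χ => ∃ p', Star Tr τ p p' ∧ SatD Tr τ p' χ
  | .conj _ ps => ∀ i, SatC Tr τ p (ps i)

/-- Semantics `⟦χ⟧^ε` of delayed formulas. -/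
def SatD (Tr : Proc → Act → Proc → Prop) (τ : Act) (p : Proc) : DFormula Act τ → Prop
  | .obs a _ φ => ∃ p', Tr p a p' ∧ Sat Tr τ p' φ
  | .conj _ ps => ∀ i, SatC Tr τ p (ps i)
  | .stableConj _ ps => Stable Tr τ p ∧ ∀ i, SatC Tr τ p (ps i)
  | .branchConj α φ _ ps =>
      (∃ p', OptStep Tr τ p α p' ∧ Sat Tr τ p' φ) ∧ ∀ i, SatC Tr τ p (ps i)

/-- Semantics `⟦ψ⟧^∧` of conjuncts. -/
def SatC (Tr : Proc → Act → Proc → Prop) (τ : Act) (p : Proc) : Conjunct Act τ → Prop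
  | .pos χ => ∃ p', Star Tr τ p p' ∧ SatD Tr τ p' χ
  | .neg χ => ¬ ∃ p', Star Tr τ p p' ∧ SatD Tr τ p' χ
end

/-- `φ` distinguishes `p` from the set `Q`. -/
def Distinguishes (Tr : Proc → Act → Proc → Prop) (τ : Act) (φ : Formula Act τ)
    (p : Proc) (Q : Set Proc) : Prop :=
  Sat Tr τ p φ ∧ ∀ q ∈ Q, ¬ Sat Tr τ q φ

/-- The delayed formula `χ` distinguishes `p` from the set `Q` w.r.t. `⟦·⟧^ε`. -/
def DistinguishesD (Tr : Proc → Act → Proc → Prop) (τ : Act) (χ : DFormula Act τ)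
    (p : Proc) (Q : Set Proc) : Prop :=
  SatD Tr τ p χ ∧ ∀ q ∈ Q, ¬ SatD Tr τ q χ

/-- The conjunct `ψ` distinguishes `p` from `q` w.r.t. `⟦·⟧^∧`. -/
def DistinguishesC (Tr : Proc → Act → Proc → Prop) (τ : Act) (ψ : Conjunct Act τ)
    (p q : Proc) : Prop :=
  SatC Tr τ p ψ ∧ ¬ SatC Tr τ q ψ

/-- Stability-respecting branching bisimulations: symmetric relations with the
branching-bisimulation transfer property and the stability-respecting
property. -/
def IsSRBBisim (Tr : Proc → Act → Proc → Prop) (τ : Act) (R : Proc → Proc → Prop) : Prop :=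
  Symmetric R ∧
  (∀ p q, R p q → ∀ α p', Tr p α p' →
    (α = τ ∧ R p' q) ∨
      ∃ q' q'', Star Tr τ q q' ∧ Tr q' α q'' ∧ R p q' ∧ R p' q'') ∧
  (∀ p q, R p q → Stable Tr τ p →
    ∃ q', Star Tr τ q q' ∧ Stable Tr τ q' ∧ R p q')

end Semantics

/-! ### Expressiveness prices -/

section Expr

variable {Act : Type} {τ : Act}

mutual
/-- Expressiveness price `expr` of formulas. -/
def exprF : Formula Act τ → Energy
  | .delayed χ => exprE χ
  | .conj I ps => ⨆ _ : Nonempty I, ((unitE 4 + unitE 2) + ⨆ i, exprC (ps i))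

/-- Expressiveness price `expr^ε` of delayed formulas. -/
def exprE : DFormula Act τ → Energy
  | .obs _ _ φ => unitE 0 + exprF φ
  | .conj I ps => ⨆ _ : Nonempty I, (unitE 2 + ⨆ i, exprC (ps i))
  | .stableConj _ ps => unitE 3 + ⨆ i, exprC (ps i)
  | .branchConj _ φ _ ps =>
      (unitE 1 + unitE 2) +
        (((unitE 0 + exprF φ) ⊔ onlyAt 5 (1 + exprF φ 0)) ⊔ ⨆ i, exprC (ps i))

/-- Expressiveness price `expr^∧` of conjuncts. -/
def exprC : Conjunct Act τ → Energy
  | .pos χ => exprE χ ⊔ onlyAt 5 (exprE χ 0)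
  | .neg χ => (unitE 7 + exprE χ) ⊔ onlyAt 6 (exprE χ 0)
end

end Expr

/-! ### The weak spectroscopy energy game -/

/-- Positions of the weak spectroscopy game. -/
inductive GPos (Proc Act : Type) : Type
  | att (p : Proc) (Q : Set Proc)                                 -- `[p,Q]_a`
  | attD (p : Proc) (Q : Set Proc)                                -- `[p,Q]^ε_a`
  | attC (p q : Proc)                                             -- `[p,q]^∧_a`
  | attB (p : Proc) (Q : Set Proc)                                -- `[p,Q]^η_a`
  | defC (p : Proc) (Q : Set Proc)                                -- `(p,Q)_d`
  | defS (p : Proc) (Q : Set Proc)                                -- `(p,Q)^s_d`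
  | defB (p : Proc) (α : Act) (p' : Proc) (Q Qa : Set Proc)       -- `(p,α,p',Q,Qa)^η_d`

/-- The zero update. -/
def zeroU : Update := fun _ => UpdComp.zero

/-- The update `-ê_i`. -/
def decU (i : Fin 8) : Update := fun k => if k = i then UpdComp.decr else UpdComp.zero

/-- The update `(min_{1,6},0,0,0,0,0,0,0)`. -/
def minU16 : Update := fun k => if k = 0 then UpdComp.minWith {5} else UpdComp.zero

/-- The update `(min_{1,7},0,0,0,0,0,0,-1)`. -/
def minU17dec8 : Update := fun k =>
  if k = 0 then UpdComp.minWith {6} else if k = 7 then UpdComp.decr else UpdComp.zero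

/-- The update `(0,-1,-1,0,0,0,0,0)`. -/
def dec23 : Update := fun k => if k = 1 ∨ k = 2 then UpdComp.decr else UpdComp.zero

/-- The update `(min_{1,6},-1,-1,0,0,0,0,0)`. -/
def minU16dec23 : Update := fun k =>
  if k = 0 then UpdComp.minWith {5}
  else if k = 1 ∨ k = 2 then UpdComp.decr else UpdComp.zero

section Game

variable {Proc Act : Type}

/-- Moves of the weak spectroscopy game. -/
inductive GMove (Tr : Proc → Act → Proc → Prop) (τ : Act) :
    GPos Proc Act → Update → GPos Proc Act → Prop
  | delay {p : Proc} {Q Q' : Set Proc} :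
      SetStar Tr τ Q Q' →
      GMove Tr τ (.att p Q) zeroU (.attD p Q')
  | procrastination {p p' : Proc} {Q : Set Proc} :
      Tr p τ p' → p ≠ p' →
      GMove Tr τ (.attD p Q) zeroU (.attD p' Q)
  | observation {p p' : Proc} {a : Act} {Q Q' : Set Proc} :
      Tr p a p' → a ≠ τ → SetStep Tr Q a Q' →
      GMove Tr τ (.attD p Q) (decU 0) (.att p' Q')
  | finishing {p : Proc} :
      GMove Tr τ (.att p ∅) zeroU (.defC p ∅)
  | immediateConj {p : Proc} {Q : Set Proc} :
      Q ≠ ∅ →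
      GMove Tr τ (.att p Q) (decU 4) (.defC p Q)
  | lateConj {p : Proc} {Q : Set Proc} :
      GMove Tr τ (.attD p Q) zeroU (.defC p Q)
  | conjAnswer {p q : Proc} {Q : Set Proc} :
      q ∈ Q →
      GMove Tr τ (.defC p Q) (decU 2) (.attC p q)
  | posConjunct {p q : Proc} {Q : Set Proc} :
      SetStar Tr τ {q} Q →
      GMove Tr τ (.attC p q) minU16 (.attD p Q)
  | negConjunct {p q : Proc} {Q : Set Proc} :
      SetStar Tr τ {p} Q → p ≠ q →
      GMove Tr τ (.attC p q) minU17dec8 (.attD q Q)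
  | stableConj {p : Proc} {Q : Set Proc} :
      Stable Tr τ p →
      GMove Tr τ (.attD p Q) zeroU (.defS p {q ∈ Q | Stable Tr τ q})
  | conjStableAnswer {p q : Proc} {Q : Set Proc} :
      q ∈ Q →
      GMove Tr τ (.defS p Q) (decU 3) (.attC p q)
  | stableFinishing {p : Proc} :
      GMove Tr τ (.defS p ∅) (decU 3) (.defC p ∅)
  | branchConj {p p' : Proc} {α : Act} {Q Qa : Set Proc} :
      OptStep Tr τ p α p' → Qa ⊆ Q →
      GMove Tr τ (.attD p Q) zeroU (.defB p α p' (Q \ Qa) Qa)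
  | branchAnswer {p p' q : Proc} {α : Act} {Q Qa : Set Proc} :
      q ∈ Q →
      GMove Tr τ (.defB p α p' Q Qa) dec23 (.attC p q)
  | branchObservation {p p' : Proc} {α : Act} {Q Qa Q' : Set Proc} :
      SetOpt Tr τ Qa α Q' →
      GMove Tr τ (.defB p α p' Q Qa) minU16dec23 (.attB p' Q')
  | branchAccounting {p : Proc} {Q : Set Proc} :
      GMove Tr τ (.attB p Q) (decU 0) (.att p Q)

/-- Defender positions of the weak spectroscopy game. -/
def isDefender : GPos Proc Act → Prop
  | .defC _ _ => True
  | .defS _ _ => True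
  | .defB _ _ _ _ _ => True
  | _ => False

/-- The weak spectroscopy energy game `G△`. -/
def specGame (Tr : Proc → Act → Proc → Prop) (τ : Act) : EGame (GPos Proc Act) where
  defender := isDefender
  move := GMove Tr τ

end Game

/-! ### Strategy formulas -/

section Strat

variable {Proc Act : Type}

mutual
/-- Attacker strategy formulas (formula sort). -/
inductive StratF (Tr : Proc → Act → Proc → Prop) (τ : Act) :
    GPos Proc Act → Energy → Formula Act τ → Prop
  | delay {p : Proc} {Q Q' : Set Proc} {u : Update} {e e' : Energy} {χ : DFormula Act τ} :
      GMove Tr τ (.att p Q) u (.attD p Q') →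
      upd e u = some e' →
      (specGame Tr τ).Win (.attD p Q') e' →
      StratD Tr τ (.attD p Q') e' χ →
      StratF Tr τ (.att p Q) e (.delayed χ)
  | immediateConj {p : Proc} {Q : Set Proc} {u : Update} {e e' : Energy}
      {I : Type} {ps : I → Conjunct Act τ} :
      GMove Tr τ (.att p Q) u (.defC p Q) →
      upd e u = some e' →
      (specGame Tr τ).Win (.defC p Q) e' →
      StratD Tr τ (.defC p Q) e' (.conj I ps) →
      StratF Tr τ (.att p Q) e (.conj I ps)

/-- Attacker strategy formulas (delayed-formula sort). -/
inductive StratD (Tr : Proc → Act → Proc → Prop) (τ : Act) :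
    GPos Proc Act → Energy → DFormula Act τ → Prop
  | procrastination {p p' : Proc} {Q : Set Proc} {u : Update} {e e' : Energy}
      {χ : DFormula Act τ} :
      GMove Tr τ (.attD p Q) u (.attD p' Q) →
      upd e u = some e' →
      (specGame Tr τ).Win (.attD p' Q) e' →
      StratD Tr τ (.attD p' Q) e' χ →
      StratD Tr τ (.attD p Q) e χ
  | observation {p p' : Proc} {a : Act} {Q Q' : Set Proc} {u : Update} {e e' : Energy}
      {φ : Formula Act τ} (ha : a ≠ τ) :
      GMove Tr τ (.attD p Q) u (.att p' Q') →
      Tr p a p' → SetStep Tr Q a Q' →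
      upd e u = some e' →
      (specGame Tr τ).Win (.att p' Q') e' →
      StratF Tr τ (.att p' Q') e' φ →
      StratD Tr τ (.attD p Q) e (.obs a ha φ)
  | lateConj {p : Proc} {Q : Set Proc} {u : Update} {e e' : Energy} {χ : DFormula Act τ} :
      GMove Tr τ (.attD p Q) u (.defC p Q) →
      upd e u = some e' →
      (specGame Tr τ).Win (.defC p Q) e' →
      StratD Tr τ (.defC p Q) e' χ →
      StratD Tr τ (.attD p Q) e χ
  | stable {p : Proc} {Q Q' : Set Proc} {u : Update} {e e' : Energy} {χ : DFormula Act τ} :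
      GMove Tr τ (.attD p Q) u (.defS p Q') →
      upd e u = some e' →
      (specGame Tr τ).Win (.defS p Q') e' →
      StratD Tr τ (.defS p Q') e' χ →
      StratD Tr τ (.attD p Q) e χ
  | branch {p p' : Proc} {α : Act} {Q Q' Qa : Set Proc} {u : Update} {e e' : Energy}
      {χ : DFormula Act τ} :
      GMove Tr τ (.attD p Q) u (.defB p α p' Q' Qa) →
      upd e u = some e' →
      (specGame Tr τ).Win (.defB p α p' Q' Qa) e' →
      StratD Tr τ (.defB p α p' Q' Qa) e' χ →
      StratD Tr τ (.attD p Q) e χ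
  | conj {p : Proc} {Q : Set Proc} {e : Energy}
      (us : {q // q ∈ Q} → Update) (es : {q // q ∈ Q} → Energy)
      (ψs : {q // q ∈ Q} → Conjunct Act τ) :
      (∀ qq : {q // q ∈ Q}, GMove Tr τ (.defC p Q) (us qq) (.attC p qq.1)) →
      (∀ qq : {q // q ∈ Q}, upd e (us qq) = some (es qq)) →
      (∀ qq : {q // q ∈ Q}, (specGame Tr τ).Win (.attC p qq.1) (es qq)) →
      (∀ qq : {q // q ∈ Q}, StratC Tr τ (.attC p qq.1) (es qq) (ψs qq)) →
      StratD Tr τ (.defC p Q) e (.conj {q // q ∈ Q} ψs)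
  | stableConj {p : Proc} {Q : Set Proc} {e : Energy}
      (hne : Q.Nonempty)
      (us : {q // q ∈ Q} → Update) (es : {q // q ∈ Q} → Energy)
      (ψs : {q // q ∈ Q} → Conjunct Act τ) :
      (∀ qq : {q // q ∈ Q}, GMove Tr τ (.defS p Q) (us qq) (.attC p qq.1)) →
      (∀ qq : {q // q ∈ Q}, upd e (us qq) = some (es qq)) →
      (∀ qq : {q // q ∈ Q}, (specGame Tr τ).Win (.attC p qq.1) (es qq)) →
      (∀ qq : {q // q ∈ Q}, StratC Tr τ (.attC p qq.1) (es qq) (ψs qq)) →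
      StratD Tr τ (.defS p Q) e (.stableConj {q // q ∈ Q} ψs)
  | stableFinish {p : Proc} {u : Update} {e e' : Energy} :
      GMove Tr τ (.defS p ∅) u (.defC p ∅) →
      upd e u = some e' →
      (specGame Tr τ).Win (.defC p (∅ : Set Proc)) e' →
      StratD Tr τ (.defS p ∅) e (.stableConj Empty fun x => x.elim)
  | branchConj {p p' : Proc} {α : Act} {Q Qa Q' : Set Proc} {ua ua' : Update}
      {e e1 ea : Energy} {φa : Formula Act τ}
      (us : {q // q ∈ Q} → Update) (es : {q // q ∈ Q} → Energy)
      (ψs : {q // q ∈ Q} → Conjunct Act τ) :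
      GMove Tr τ (.defB p α p' Q Qa) ua (.attB p' Q') →
      GMove Tr τ (.attB p' Q') ua' (.att p' Q') →
      upd e ua = some e1 →
      upd e1 ua' = some ea →
      (specGame Tr τ).Win (.att p' Q') ea →
      StratF Tr τ (.att p' Q') ea φa →
      (∀ qq : {q // q ∈ Q}, GMove Tr τ (.defB p α p' Q Qa) (us qq) (.attC p qq.1)) →
      (∀ qq : {q // q ∈ Q}, upd e (us qq) = some (es qq)) →
      (∀ qq : {q // q ∈ Q}, (specGame Tr τ).Win (.attC p qq.1) (es qq)) →
      (∀ qq : {q // q ∈ Q}, StratC Tr τ (.attC p qq.1) (es qq) (ψs qq)) →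
      StratD Tr τ (.defB p α p' Q Qa) e (.branchConj α φa {q // q ∈ Q} ψs)

/-- Attacker strategy formulas (conjunct sort). -/
inductive StratC (Tr : Proc → Act → Proc → Prop) (τ : Act) :
    GPos Proc Act → Energy → Conjunct Act τ → Prop
  | pos {p q : Proc} {Q' : Set Proc} {u : Update} {e e' : Energy} {χ : DFormula Act τ} :
      GMove Tr τ (.attC p q) u (.attD p Q') →
      upd e u = some e' →
      (specGame Tr τ).Win (.attD p Q') e' →
      StratD Tr τ (.attD p Q') e' χ →
      StratC Tr τ (.attC p q) e (.pos χ)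
  | neg {p q : Proc} {P' : Set Proc} {u : Update} {e e' : Energy} {χ : DFormula Act τ} :
      GMove Tr τ (.attC p q) u (.attD q P') →
      upd e u = some e' →
      (specGame Tr τ).Win (.attD q P') e' →
      StratD Tr τ (.attD q P') e' χ →
      StratC Tr τ (.attC p q) e (.neg χ)
end

end Strat

section Updates

lemma one_add_tsub_one (x : ℕ∞) : 1 + x - 1 = x :=
  (ENat.addLECancellable_of_ne_top ENat.one_ne_top).add_tsub_cancel_left

lemma upd_eq_some {e : Energy} {u : Update} (h : ∀ k, u k = UpdComp.decr → e k ≠ 0) :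
    upd e u = some (fun k =>
      match u k with
      | UpdComp.decr => e k - 1
      | UpdComp.zero => e k
      | UpdComp.minWith D => (insert k D).inf e) :=
  if_pos h

lemma upd_mono {e e' d : Energy} {u : Update} (hle : e ≤ e') (h : upd e u = some d) :
    ∃ d', upd e' u = some d' ∧ d ≤ d' := by
  unfold upd at h
  split_ifs at h with hdef
  cases h
  refine ⟨_, upd_eq_some fun k hk h0 => hdef k hk (le_antisymm (h0 ▸ hle k) zero_le), fun k => ?_⟩
  dsimp only
  split
  · exact tsub_le_tsub_right (hle k) 1
  · exact hle k
  · exact Finset.inf_mono_fun fun b _ => hle b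

lemma upd_zeroU (e : Energy) : upd e zeroU = some e := by
  rw [upd_eq_some fun k hk => by simp [zeroU] at hk]
  simp [zeroU]

lemma upd_decU_unitE_add (i : Fin 8) (e : Energy) : upd (unitE i + e) (decU i) = some e := by
  rw [upd_eq_some fun k hk => by by_cases hki : k = i <;> simp_all [decU, unitE]]
  congr 1
  funext k
  by_cases hki : k = i <;> simp [decU, unitE, hki, one_add_tsub_one]

lemma upd_dec23 (e : Energy) : upd ((unitE 1 + unitE 2) + e) dec23 = some e := by
  rw [upd_eq_some fun k hk => by fin_cases k <;> simp_all [dec23, unitE]]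
  congr 1
  funext k
  fin_cases k <;> simp [dec23, unitE, one_add_tsub_one]

lemma upd_minU16dec23 (e : Energy) :
    upd ((unitE 1 + unitE 2) + e) minU16dec23 = some (Function.update e 0 (e 0 ⊓ e 5)) := by
  rw [upd_eq_some fun k hk => by fin_cases k <;> simp_all [minU16dec23, unitE]]
  congr 1
  funext k
  fin_cases k <;> simp [minU16dec23, unitE, one_add_tsub_one]

lemma upd_minU16 (e : Energy) :
    upd (e ⊔ onlyAt 5 (e 0)) minU16 = some (e ⊔ onlyAt 5 (e 0)) := by
  rw [upd_eq_some fun k hk => by fin_cases k <;> simp_all [minU16]]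
  congr 1
  funext k
  fin_cases k <;> simp [minU16, onlyAt]

lemma upd_minU17dec8 (e : Energy) :
    upd ((unitE 7 + e) ⊔ onlyAt 6 (e 0)) minU17dec8 = some (e ⊔ onlyAt 6 (e 0)) := by
  rw [upd_eq_some fun k hk => by fin_cases k <;> simp_all [minU17dec8, unitE]]
  congr 1
  funext k
  fin_cases k <;> simp [minU17dec8, unitE, onlyAt, one_add_tsub_one]

end Updates

namespace EGame

variable {Pos : Type} {G : EGame Pos}

lemma Win.mono {g : Pos} {e : Energy} (h : G.Win g e) {e' : Energy} (hle : e ≤ e') :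
    G.Win g e' := by
  induction h generalizing e' with
  | attack hg hm hu _ ih =>
    obtain ⟨d', hu', hd⟩ := upd_mono hle hu
    exact .attack hg hm hu' (ih hd)
  | defend hg hdef _ ih =>
    refine .defend hg (fun u g' hm => ?_) (fun u g' d' hm hu' => ?_)
    all_goals obtain ⟨d, hd⟩ := Option.ne_none_iff_exists'.mp (hdef u g' hm)
    all_goals obtain ⟨d'', hu'', hdd⟩ := upd_mono hle hd
    · simp [hu'']
    · cases hu'.symm.trans hu''
      exact ih u g' d hm hd hdd

lemma Win.of_forall_move {g : Pos} {e : Energy} (hg : G.defender g)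
    (h : ∀ u g', G.move g u g' → ∃ e', upd e u = some e' ∧ G.Win g' e') : G.Win g e := by
  refine .defend hg (fun u g' hm => ?_) (fun u g' e' hm hu => ?_)
  · obtain ⟨e', he, -⟩ := h u g' hm
    simp [he]
  · obtain ⟨e'', he, hw⟩ := h u g' hm
    cases hu.symm.trans he
    exact hw

end EGame

section Game

variable {Proc Act : Type} {Tr : Proc → Act → Proc → Prop} {τ : Act}
  {p p' q : Proc} {Q : Set Proc} {e : Energy}

lemma win_defC_empty (p : Proc) (e : Energy) : (specGame Tr τ).Win (.defC p ∅) e :=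
  .of_forall_move trivial fun _ _ hm => by
    cases hm with
    | conjAnswer hq => exact absurd hq (Set.notMem_empty _)

lemma win_att_empty (p : Proc) (e : Energy) : (specGame Tr τ).Win (.att p ∅) e :=
  .attack id GMove.finishing (upd_zeroU e) (win_defC_empty p e)

lemma win_att_of_win_attD (h : (specGame Tr τ).Win (.attD p {q' | ∃ q ∈ Q, Star Tr τ q q'}) e) :
    (specGame Tr τ).Win (.att p Q) e :=
  .attack id (GMove.delay rfl) (upd_zeroU e) h

lemma win_att_of_win_defC (hQ : Q.Nonempty) (h : (specGame Tr τ).Win (.defC p Q) e) :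
    (specGame Tr τ).Win (.att p Q) (unitE 4 + e) :=
  .attack id (GMove.immediateConj hQ.ne_empty) (upd_decU_unitE_add 4 e) h

lemma win_attD_of_star (hp : Star Tr τ p p') (h : (specGame Tr τ).Win (.attD p' Q) e) :
    (specGame Tr τ).Win (.attD p Q) e := by
  induction hp using Relation.ReflTransGen.head_induction_on with
  | refl => exact h
  | @head a c hstep _ ih =>
    by_cases hac : a = c
    · exact hac ▸ ih
    · exact .attack id (GMove.procrastination hstep hac) (upd_zeroU e) ih

lemma win_attD_of_win_att {a : Act} (hstep : Tr p a p') (ha : a ≠ τ)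
    (h : (specGame Tr τ).Win (.att p' {q' | ∃ q ∈ Q, Tr q a q'}) e) :
    (specGame Tr τ).Win (.attD p Q) (unitE 0 + e) :=
  .attack id (GMove.observation hstep ha rfl) (upd_decU_unitE_add 0 e) h

lemma win_attD_of_win_defC (h : (specGame Tr τ).Win (.defC p Q) e) :
    (specGame Tr τ).Win (.attD p Q) e :=
  .attack id GMove.lateConj (upd_zeroU e) h

lemma win_attD_of_win_defS (hp : Stable Tr τ p)
    (h : (specGame Tr τ).Win (.defS p {q ∈ Q | Stable Tr τ q}) e) :
    (specGame Tr τ).Win (.attD p Q) e :=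
  .attack id (GMove.stableConj hp) (upd_zeroU e) h

lemma win_attD_of_win_defB {α : Act} {Qa : Set Proc} (hp : OptStep Tr τ p α p') (hQa : Qa ⊆ Q)
    (h : (specGame Tr τ).Win (.defB p α p' (Q \ Qa) Qa) e) :
    (specGame Tr τ).Win (.attD p Q) e :=
  .attack id (GMove.branchConj hp hQa) (upd_zeroU e) h

lemma win_attB_of_win_att (h : (specGame Tr τ).Win (.att p Q) e) :
    (specGame Tr τ).Win (.attB p Q) (unitE 0 + e) :=
  .attack id GMove.branchAccounting (upd_decU_unitE_add 0 e) h

lemma win_attC_of_win_attD_pos (h : (specGame Tr τ).Win (.attD p {q' | Star Tr τ q q'}) e) :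
    (specGame Tr τ).Win (.attC p q) (e ⊔ onlyAt 5 (e 0)) :=
  .attack id (GMove.posConjunct (by ext; simp)) (upd_minU16 e) (h.mono le_sup_left)

lemma win_attC_of_win_attD_neg (hpq : p ≠ q)
    (h : (specGame Tr τ).Win (.attD q {p' | Star Tr τ p p'}) e) :
    (specGame Tr τ).Win (.attC p q) ((unitE 7 + e) ⊔ onlyAt 6 (e 0)) :=
  .attack id (GMove.negConjunct (by ext; simp) hpq) (upd_minU17dec8 e) (h.mono le_sup_left)

lemma win_defC_of_forall (h : ∀ q ∈ Q, (specGame Tr τ).Win (.attC p q) e) :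
    (specGame Tr τ).Win (.defC p Q) (unitE 2 + e) :=
  .of_forall_move trivial fun _ _ hm => by
    cases hm with
    | conjAnswer hq => exact ⟨e, upd_decU_unitE_add 2 e, h _ hq⟩

lemma win_defS_of_forall (h : ∀ q ∈ Q, (specGame Tr τ).Win (.attC p q) e) :
    (specGame Tr τ).Win (.defS p Q) (unitE 3 + e) :=
  .of_forall_move trivial fun _ _ hm => by
    cases hm with
    | conjStableAnswer hq => exact ⟨e, upd_decU_unitE_add 3 e, h _ hq⟩
    | stableFinishing => exact ⟨e, upd_decU_unitE_add 3 e, win_defC_empty p e⟩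

-- `onlyAt 5 (1 + f 0) ≤ B` survives the `min_{1,6}` of the branching observation and pays
-- for the accounting move that follows it.
lemma win_defB_of_forall {α : Act} {Qc Qa : Set Proc} {B f : Energy}
    (hB : (unitE 0 + f) ⊔ onlyAt 5 (1 + f 0) ≤ B)
    (hconj : ∀ q ∈ Qc, (specGame Tr τ).Win (.attC p q) B)
    (hobs : (specGame Tr τ).Win (.att p' {q' | ∃ q ∈ Qa, OptStep Tr τ q α q'}) f) :
    (specGame Tr τ).Win (.defB p α p' Qc Qa) ((unitE 1 + unitE 2) + B) := by
  have hB0 : unitE 0 + f ≤ Function.update B 0 (B 0 ⊓ B 5) := by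
    intro k
    rcases eq_or_ne k 0 with rfl | hk
    · have h0 := (le_sup_left.trans hB) 0
      have h5 := (le_sup_right.trans hB) 5
      simp_all [unitE, onlyAt]
    · simpa [hk] using (le_sup_left.trans hB) k
  refine .of_forall_move trivial fun _ _ hm => ?_
  cases hm with
  | branchAnswer hq => exact ⟨B, upd_dec23 B, hconj _ hq⟩
  | branchObservation hQ' =>
    exact ⟨_, upd_minU16dec23 B, (win_attB_of_win_att (hQ' ▸ hobs)).mono hB0⟩

end Game

section Distinction

variable {Proc Act : Type} {Tr : Proc → Act → Proc → Prop} {τ : Act}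

lemma win_attC_iSup_of_not_forall {I : Type} {ps : I → Conjunct Act τ} {p q : Proc}
    (hwin : ∀ i, ¬ SatC Tr τ q (ps i) → (specGame Tr τ).Win (.attC p q) (exprC (ps i)))
    (hq : ¬ ∀ i, SatC Tr τ q (ps i)) :
    (specGame Tr τ).Win (.attC p q) (⨆ i, exprC (ps i)) := by
  obtain ⟨i, hi⟩ := not_forall.mp hq
  exact (hwin i hi).mono (le_iSup (fun i => exprC (ps i)) i)

mutual

theorem Distinguishes.win_att {φ : Formula Act τ} {p : Proc} {Q : Set Proc}
    (h : Distinguishes Tr τ φ p Q) : (specGame Tr τ).Win (.att p Q) (exprF φ) :=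
  match φ, h with
  | .delayed χ, ⟨⟨p', hp, hχ⟩, hQ⟩ =>
    win_att_of_win_attD <| win_attD_of_star hp <| DistinguishesD.win_attD
      ⟨hχ, fun _ ⟨q, hq, hstar⟩ hχq => hQ q hq ⟨_, hstar, hχq⟩⟩
  | .conj I ps, ⟨hp, hQ⟩ => by
    rcases Q.eq_empty_or_nonempty with rfl | hne
    · exact win_att_empty p _
    obtain ⟨i, -⟩ := not_forall.mp (hQ _ hne.some_mem)
    rw [exprF, iSup_pos ⟨i⟩, add_assoc]
    exact win_att_of_win_defC hne <| win_defC_of_forall fun q hq =>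
      win_attC_iSup_of_not_forall (fun i hi => DistinguishesC.win_attC ⟨hp i, hi⟩) (hQ q hq)

theorem DistinguishesD.win_attD {χ : DFormula Act τ} {p : Proc} {Q : Set Proc}
    (h : DistinguishesD Tr τ χ p Q) : (specGame Tr τ).Win (.attD p Q) (exprE χ) :=
  match χ, h with
  | .obs a ha φ, ⟨⟨p', hstep, hφ⟩, hQ⟩ =>
    win_attD_of_win_att hstep ha <| Distinguishes.win_att
      ⟨hφ, fun _ ⟨q, hq, hstep'⟩ hφq => hQ q hq ⟨_, hstep', hφq⟩⟩
  | .conj I ps, ⟨hp, hQ⟩ => by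
    rcases Q.eq_empty_or_nonempty with rfl | hne
    · exact win_attD_of_win_defC (win_defC_empty p _)
    obtain ⟨i, -⟩ := not_forall.mp (hQ _ hne.some_mem)
    rw [exprE, iSup_pos ⟨i⟩]
    exact win_attD_of_win_defC <| win_defC_of_forall fun q hq =>
      win_attC_iSup_of_not_forall (fun i hi => DistinguishesC.win_attC ⟨hp i, hi⟩) (hQ q hq)
  | .stableConj I ps, ⟨⟨hstable, hp⟩, hQ⟩ =>
    win_attD_of_win_defS hstable <| win_defS_of_forall fun q ⟨hq, hqstable⟩ =>
      win_attC_iSup_of_not_forall (fun i hi => DistinguishesC.win_attC ⟨hp i, hi⟩)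
        fun hall => hQ q hq ⟨hqstable, hall⟩
  | .branchConj α φ I ps, ⟨⟨⟨p', hstep, hφ⟩, hp⟩, hQ⟩ => by
    -- `Qa` collects the processes refuted by `(α)φ`; each of the others is refuted by a conjunct
    set Qa := {q ∈ Q | ∀ q', OptStep Tr τ q α q' → ¬ Sat Tr τ q' φ}
    have hanswer : ∀ q ∈ Q \ Qa, ∃ q', OptStep Tr τ q α q' ∧ Sat Tr τ q' φ := by
      rintro q ⟨hq, hqa⟩
      by_contra! hno
      exact hqa ⟨hq, hno⟩
    refine win_attD_of_win_defB (Qa := Qa) hstep (fun _ hq => hq.1) <|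
      win_defB_of_forall le_sup_left (fun q hq => ?_) ?_
    · exact (win_attC_iSup_of_not_forall (fun i hi => DistinguishesC.win_attC ⟨hp i, hi⟩)
        fun hall => hQ q hq.1 ⟨hanswer q hq, hall⟩).mono le_sup_right
    · exact Distinguishes.win_att ⟨hφ, fun _ ⟨_, hqa, hstep'⟩ => hqa.2 _ hstep'⟩

theorem DistinguishesC.win_attC {ψ : Conjunct Act τ} {p q : Proc}
    (h : DistinguishesC Tr τ ψ p q) : (specGame Tr τ).Win (.attC p q) (exprC ψ) :=
  match ψ, h with
  | .pos χ, ⟨⟨p', hp, hχ⟩, hq⟩ =>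
    win_attC_of_win_attD_pos <| win_attD_of_star hp <| DistinguishesD.win_attD
      ⟨hχ, fun _ hstar hχq => hq ⟨_, hstar, hχq⟩⟩
  | .neg χ, ⟨hp, hq⟩ => by
    obtain ⟨q', hq', hχ⟩ := not_not.mp hq
    have hpq : p ≠ q := by
      rintro rfl
      exact hp ⟨q', hq', hχ⟩
    exact win_attC_of_win_attD_neg hpq <| win_attD_of_star hq' <| DistinguishesD.win_attD
      ⟨hχ, fun _ hstar hχp => hp ⟨_, hstar, hχp⟩⟩

end

end Distinction

/-- if `φ` distinguishes `p` from `Q`, then `expr(φ)` is an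
attacker winning budget at `[p,Q]_a`. -/
theorem distinction_price_in_win {Proc Act : Type} (Tr : Proc → Act → Proc → Prop)
    (τ : Act) (φ : Formula Act τ) (p : Proc) (Q : Set Proc)
    (h : Distinguishes Tr τ φ p Q) :
    (specGame Tr τ).Win (.att p Q) (exprF φ) :=
  h.win_att

end Spectroscopy
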